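/- arXiv:math/9904085 — 3 statements merged into one kernel-verified Lean document; each statement's English description precedes it below -/
import Mathlib

section
/- Let p₁(X,Y,Z) = X^N + Σ_{j=0}^{N-1} a_j(Y,Z) X^j and p₂(X,Y,Z) = Y^M + K(X,Y,Z) be formal power series in variables X, Y ∈ ℂ and Z = (Z',Z'') ∈ ℂ^{k'} × ℂ^{k''}, where each a_j is a formal power series in (Y,Z) with a_j(0,0) = 0, and K(X,Y,Z',0) = 0 identically. Then the ideal generated by p₁ and p₂ in the formal power series ring ℂ⟦X,Y,Z⟧ contains a power series of the form r(Y,Z) = Y^{M·N²} + K'(Y,Z) with K'(Y,Z',0) = 0 identically. -/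
noncomputable section

/-- Formal substitution: `substPS F g = g ∘ F`, well-defined (agreeing with the usual
substitution) when each `F j` has zero constant term. -/
noncomputable def substPS {σ τ : Type*} [Fintype σ] [DecidableEq σ]
    (F : σ → MvPowerSeries τ ℂ) (g : MvPowerSeries σ ℂ) : MvPowerSeries τ ℂ :=
  fun d =>
    MvPowerSeries.coeff d
      ((MvPolynomial.aeval F)
        (MvPowerSeries.trunc ℂ
          (Finsupp.equivFunOnFinite.symm fun _ => (d.sum fun _ v => v) + 1) g))

/-- Formal partial derivative of a multivariate formal power series. -/
noncomputable def pderivPS {σ : Type*} (i : σ) (f : MvPowerSeries σ ℂ) : MvPowerSeries σ ℂ :=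
  fun d => ((d i : ℂ) + 1) * MvPowerSeries.coeff (d + Finsupp.single i 1) f

/-- Setting the second group of variables equal to `0` in a formal power series. -/
noncomputable def setSnd0 {A B : Type*} (f : MvPowerSeries (A ⊕ B) ℂ) : MvPowerSeries A ℂ :=
  fun d => MvPowerSeries.coeff (Finsupp.mapDomain Sum.inl d) f

/-- A formal power series is convergent iff its coefficients grow at most geometrically. -/
def IsConvergentPS {σ : Type*} (f : MvPowerSeries σ ℂ) : Prop :=
  ∃ C r : ℝ, 0 < r ∧ ∀ d : σ →₀ ℕ, ‖MvPowerSeries.coeff d f‖ ≤ C * r ^ (d.sum fun _ v => v)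

end

/-!
As the `a j` do not involve `X` and vanish at the origin, Weierstrass division by
`p₁ = X ^ N + ∑ a j * X ^ j` can be carried out coefficientwise, by recursion on the degree in
the variables other than `X`: `X ^ j * K = q j * p₁ + ∑ k, r j k * X ^ k` with `X`-free `r j k`,
uniquely. The matrix `C = Y ^ M • 1 + (r j k)` then maps the vector `(X ^ k)ₖ` into the ideal
`(p₁, p₂)`, so by the adjugate identity `det C ∈ (p₁, p₂)`. Now `det C` is `X`-free, and setting
`Z'' = 0` kills `K`, hence by uniqueness every `r j k`, so that `det C ≡ Y ^ (M * N)` modulo `Z''`.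
Multiply by `Y ^ (M * N ^ 2 - M * N)`.
-/

open Matrix in
theorem Matrix.det_mul_mem_of_mulVec_mem {n R : Type*} [Fintype n] [DecidableEq n] [CommRing R]
    {I : Ideal R} {C : Matrix n n R} {v : n → R} (h : ∀ j, (C *ᵥ v) j ∈ I) (i : n) :
    C.det * v i ∈ I := by
  have hv : C.det • v = C.adjugate *ᵥ (C *ᵥ v) := by
    rw [mulVec_mulVec, adjugate_mul, smul_mulVec, one_mulVec]
  rw [← smul_eq_mul, ← Pi.smul_apply, hv]
  exact Ideal.sum_mem _ fun k _ => Ideal.mul_mem_left _ _ (h k)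

open Finsupp

namespace MvPowerSeries

variable {σ R : Type*} [CommRing R]

section KillVars

variable (s t : Set σ)

noncomputable def killVars : MvPowerSeries σ R →ₐ[R] MvPowerSeries σ R :=
  (rename (Function.Embedding.subtype (· ∉ s))).comp
    (killCompl (Function.Embedding.subtype (· ∉ s)))

variable {s t}

theorem coeff_killVars_of_forall {d : σ →₀ ℕ} (hd : ∀ i ∈ s, d i = 0)
    (f : MvPowerSeries σ R) : coeff d (killVars s f) = coeff d f := by
  have : embDomain (Function.Embedding.subtype (· ∉ s)) (d.subtypeDomain (· ∉ s)) = d := by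
    ext i
    by_cases hi : i ∈ s
    · rw [hd i hi, embDomain_of_notMem_range]
      simpa using hi
    · exact embDomain_apply_self (f := Function.Embedding.subtype (· ∉ s)) _ ⟨i, hi⟩
  rw [killVars, AlgHom.comp_apply, ← this, coeff_embDomain_rename, coeff_killCompl]

theorem coeff_killVars_of_exists {d : σ →₀ ℕ} (hd : ∃ i ∈ s, d i ≠ 0)
    (f : MvPowerSeries σ R) : coeff d (killVars s f) = 0 := by
  refine coeff_rename_eq_zero _ _ ?_
  rintro ⟨e, rfl⟩
  obtain ⟨i, hi, hne⟩ := hd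
  rw [← embDomain_eq_mapDomain, embDomain_of_notMem_range] at hne
  · exact hne rfl
  · simpa using hi

theorem killVars_eq_self_iff {f : MvPowerSeries σ R} :
    killVars s f = f ↔ ∀ d : σ →₀ ℕ, (∃ i ∈ s, d i ≠ 0) → coeff d f = 0 := by
  refine ⟨fun h d hd => h ▸ coeff_killVars_of_exists hd f, fun h => ?_⟩
  ext d
  by_cases hd : ∃ i ∈ s, d i ≠ 0
  · rw [coeff_killVars_of_exists hd, h d hd]
  · push Not at hd
    exact coeff_killVars_of_forall hd f

theorem killVars_eq_zero_iff {f : MvPowerSeries σ R} :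
    killVars s f = 0 ↔ ∀ d : σ →₀ ℕ, (∀ i ∈ s, d i = 0) → coeff d f = 0 := by
  refine ⟨fun h d hd => by rw [← coeff_killVars_of_forall hd, h, map_zero], fun h => ?_⟩
  ext d
  by_cases hd : ∃ i ∈ s, d i ≠ 0
  · rw [coeff_killVars_of_exists hd, map_zero]
  · push Not at hd
    rw [coeff_killVars_of_forall hd, h d hd, map_zero]

theorem killVars_singleton_eq_self_iff {x : σ} {f : MvPowerSeries σ R} :
    killVars {x} f = f ↔ ∀ d : σ →₀ ℕ, d x ≠ 0 → coeff d f = 0 := by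
  simp [killVars_eq_self_iff]

theorem killVars_X {i : σ} (hi : i ∉ s) : killVars s (X i : MvPowerSeries σ R) = X i := by
  have := killCompl_X (R := R) (e := Function.Embedding.subtype (· ∉ s)) ⟨i, hi⟩
  rw [Function.Embedding.subtype_apply] at this
  rw [killVars, AlgHom.comp_apply, this, rename_X, Function.Embedding.subtype_apply]

theorem constantCoeff_killVars (f : MvPowerSeries σ R) :
    constantCoeff (killVars s f) = constantCoeff f := by
  simpa using coeff_killVars_of_forall (d := 0) (by simp) f

theorem killVars_killVars (f : MvPowerSeries σ R) :
    killVars s (killVars t f) = killVars (s ∪ t) f := by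
  ext d
  by_cases hs : ∃ i ∈ s, d i ≠ 0
  · rw [coeff_killVars_of_exists hs,
      coeff_killVars_of_exists (s := s ∪ t) (hs.imp fun _ h => ⟨Or.inl h.1, h.2⟩)]
  push Not at hs
  rw [coeff_killVars_of_forall hs]
  by_cases ht : ∃ i ∈ t, d i ≠ 0
  · rw [coeff_killVars_of_exists ht,
      coeff_killVars_of_exists (s := s ∪ t) (ht.imp fun _ h => ⟨Or.inr h.1, h.2⟩)]
  push Not at ht
  rw [coeff_killVars_of_forall ht, coeff_killVars_of_forall (fun i hi => hi.elim (hs i) (ht i))]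

theorem killVars_comm (f : MvPowerSeries σ R) :
    killVars s (killVars t f) = killVars t (killVars s f) := by
  rw [killVars_killVars, killVars_killVars, Set.union_comm]

end KillVars

section WeierstrassDivision

variable (x : σ) {N : ℕ}

noncomputable def distinguishedPoly (a : Fin N → MvPowerSeries σ R) : MvPowerSeries σ R :=
  X x ^ N + ∑ j, a j * X x ^ (j : ℕ)

/-- The coefficient of `X x ^ k` in `F`, as a series in the other variables. -/
noncomputable def slice (k : ℕ) (F : MvPowerSeries σ R) : MvPowerSeries σ R :=
  fun c => if c x = 0 then coeff (c + single x k) F else 0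

variable {x}

theorem coeff_add_single_mul_distinguishedPoly (a : Fin N → MvPowerSeries σ R)
    (g : MvPowerSeries σ R) (c : σ →₀ ℕ) :
    coeff (c + single x N) (g * distinguishedPoly x a) =
      coeff c g + ∑ j : Fin N, coeff (c + single x (N - j)) (a j * g) := by
  rw [distinguishedPoly, mul_add, map_add, X_pow_eq, coeff_add_mul_monomial, mul_one,
    Finset.mul_sum, map_sum]
  congr 1
  refine Finset.sum_congr rfl fun j _ => ?_
  rw [show c + single x N = c + single x (N - j) + single x (j : ℕ) by
      rw [add_assoc, ← single_add, Nat.sub_add_cancel j.2.le],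
    X_pow_eq, mul_left_comm, ← mul_assoc, coeff_add_mul_monomial, mul_one, mul_comm]

theorem coeff_mul_X_pow_of_killVars {r : MvPowerSeries σ R} (hr : killVars {x} r = r)
    (d : σ →₀ ℕ) (k : ℕ) :
    coeff d (r * X x ^ k) = if d x = k then coeff (d.erase x) r else 0 := by
  rw [X_pow_eq, coeff_mul_monomial, mul_one]
  split_ifs with hle hk hk
  · rw [show d - single x k = d.erase x from ?_]
    ext i
    by_cases hi : i = x
    · subst hi
      simp [hk]
    · simp [erase_ne hi, Ne.symm hi]
  · apply killVars_singleton_eq_self_iff.1 hr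
    have := single_le_iff.1 hle
    rw [tsub_apply, single_eq_same]
    omega
  · exact absurd (single_le_iff.2 hk.ge) hle
  · rfl

theorem coeff_sum_mul_X_pow {r : Fin N → MvPowerSeries σ R}
    (hr : ∀ k, killVars {x} (r k) = r k) (d : σ →₀ ℕ) :
    coeff d (∑ k : Fin N, r k * X x ^ (k : ℕ)) =
      if h : d x < N then coeff (d.erase x) (r ⟨d x, h⟩) else 0 := by
  simp_rw [map_sum, coeff_mul_X_pow_of_killVars (hr _)]
  split_ifs with h
  · rw [Finset.sum_eq_single ⟨d x, h⟩ (fun k _ hk => if_neg fun hdk => hk (Fin.ext hdk.symm))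
      (by simp), if_pos rfl]
  · exact Finset.sum_eq_zero fun k _ => if_neg (by omega)

theorem killVars_slice (k : ℕ) (F : MvPowerSeries σ R) :
    killVars {x} (slice x k F) = slice x k F :=
  killVars_singleton_eq_self_iff.2 fun _ hd => if_neg hd

theorem eq_sum_slice_mul_X_pow {F : MvPowerSeries σ R} (hF : ∀ d, N ≤ d x → coeff d F = 0) :
    F = ∑ k : Fin N, slice x k F * X x ^ (k : ℕ) := by
  ext d
  rw [coeff_sum_mul_X_pow fun k => killVars_slice k F]
  split_ifs with h
  · change coeff d F = if (d.erase x) x = 0 then coeff (d.erase x + single x (d x)) F else 0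
    rw [if_pos erase_same, erase_add_single]
  · exact hF d (not_lt.1 h)

variable (x) [DecidableEq σ]

noncomputable def offAntidiagonal (D : σ →₀ ℕ) : Finset ((σ →₀ ℕ) × (σ →₀ ℕ)) :=
  (Finset.HasAntidiagonal.antidiagonal D).filter fun p => p.1 ≠ 0 ∧ p.1 x = 0

theorem degree_erase_lt_of_mem_offAntidiagonal {D : σ →₀ ℕ} {p : (σ →₀ ℕ) × (σ →₀ ℕ)}
    (hp : p ∈ offAntidiagonal x D) : (p.2.erase x).degree < (D.erase x).degree := by
  obtain ⟨hpD, hne, hx⟩ := by simpa [offAntidiagonal] using hp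
  rw [← hpD, erase_add, map_add, erase_of_notMem_support (f := p.1) (by simpa using hx)]
  have := (degree_eq_zero_iff p.1).not.2 hne
  omega

/-- Read off from the coefficients of `f = q * distinguishedPoly x a + r` at the exponents
`c + single x N`, to which `r` does not contribute. -/
noncomputable def weierstrassQuot (a : Fin N → MvPowerSeries σ R) (f : MvPowerSeries σ R) :
    MvPowerSeries σ R
  | c => coeff (c + single x N) f -
      ∑ j : Fin N, ∑ p ∈ (offAntidiagonal x (c + single x (N - j))).attach,
        coeff p.1.1 (a j) * weierstrassQuot a f p.1.2
termination_by c => (c.erase x).degree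
decreasing_by
  have := degree_erase_lt_of_mem_offAntidiagonal x p.2
  rwa [erase_add, erase_single, add_zero] at this

theorem coeff_weierstrassQuot (a : Fin N → MvPowerSeries σ R) (f : MvPowerSeries σ R)
    (c : σ →₀ ℕ) :
    coeff c (weierstrassQuot x a f) = coeff (c + single x N) f -
      ∑ j : Fin N, ∑ p ∈ offAntidiagonal x (c + single x (N - j)),
        coeff p.1 (a j) * coeff p.2 (weierstrassQuot x a f) := by
  conv_lhs => rw [coeff_apply, weierstrassQuot]
  exact congrArg _ (Finset.sum_congr rfl fun j _ => Finset.sum_attach _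
    (fun p : (σ →₀ ℕ) × (σ →₀ ℕ) => coeff p.1 (a j) * coeff p.2 (weierstrassQuot x a f)))

variable {x}

theorem coeff_mul_eq_sum_offAntidiagonal {a : MvPowerSeries σ R} (ha0 : constantCoeff a = 0)
    (ha : killVars {x} a = a) (g : MvPowerSeries σ R) (D : σ →₀ ℕ) :
    coeff D (a * g) = ∑ p ∈ offAntidiagonal x D, coeff p.1 a * coeff p.2 g := by
  rw [coeff_mul, offAntidiagonal, Finset.sum_filter_of_ne]
  rintro p - hp
  refine ⟨fun h0 => hp ?_, by_contra fun hx => hp ?_⟩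
  · rw [h0, coeff_zero_eq_constantCoeff_apply, ha0, zero_mul]
  · rw [killVars_singleton_eq_self_iff.1 ha _ hx, zero_mul]

variable {a : Fin N → MvPowerSeries σ R} (ha0 : ∀ j, constantCoeff (a j) = 0)
  (ha : ∀ j, killVars {x} (a j) = a j)
include ha0 ha

theorem coeff_weierstrassQuot_mul_distinguishedPoly (f : MvPowerSeries σ R) (c : σ →₀ ℕ) :
    coeff (c + single x N) (weierstrassQuot x a f * distinguishedPoly x a) =
      coeff (c + single x N) f := by
  rw [coeff_add_single_mul_distinguishedPoly, coeff_weierstrassQuot]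
  simp_rw [coeff_mul_eq_sum_offAntidiagonal (ha0 _) (ha _)]
  exact sub_add_cancel _ _

theorem exists_eq_mul_distinguishedPoly_add (f : MvPowerSeries σ R) :
    ∃ (q : MvPowerSeries σ R) (r : Fin N → MvPowerSeries σ R),
      (∀ k, killVars {x} (r k) = r k) ∧
        f = q * distinguishedPoly x a + ∑ k : Fin N, r k * X x ^ (k : ℕ) := by
  set q := weierstrassQuot x a f
  refine ⟨q, fun k => slice x k (f - q * distinguishedPoly x a), fun k => killVars_slice _ _, ?_⟩
  rw [← sub_eq_iff_eq_add']
  refine eq_sum_slice_mul_X_pow fun d hd => ?_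
  rw [← tsub_add_cancel_of_le (single_le_iff.2 hd), map_sub,
    coeff_weierstrassQuot_mul_distinguishedPoly ha0 ha, sub_self]

theorem eq_zero_of_mul_distinguishedPoly_add_eq_zero {q : MvPowerSeries σ R}
    {r : Fin N → MvPowerSeries σ R} (hr : ∀ k, killVars {x} (r k) = r k)
    (h : q * distinguishedPoly x a + ∑ k : Fin N, r k * X x ^ (k : ℕ) = 0) (k : Fin N) :
    r k = 0 := by
  have hq : q = 0 := by
    suffices ∀ n c, (c.erase x).degree = n → coeff c q = 0 from
      ext fun c => by rw [this _ c rfl, map_zero]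
    intro n
    induction n using Nat.strong_induction_on with
    | _ n ih =>
      intro c hc
      have hlower : ∀ j : Fin N, coeff (c + single x (N - j)) (a j * q) = 0 := fun j => by
        rw [coeff_mul_eq_sum_offAntidiagonal (ha0 j) (ha j)]
        refine Finset.sum_eq_zero fun p hp => ?_
        have := degree_erase_lt_of_mem_offAntidiagonal x hp
        rw [erase_add, erase_single, add_zero, hc] at this
        rw [ih _ this p.2 rfl, mul_zero]
      have hc' := congrArg (coeff (c + single x N)) h
      rwa [map_add, coeff_add_single_mul_distinguishedPoly, coeff_sum_mul_X_pow hr,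
        dif_neg (by simp), add_zero, map_zero, Finset.sum_eq_zero fun j _ => hlower j,
        add_zero] at hc'
  ext d
  by_cases hd : d x = 0
  · have hk := congrArg (coeff (d + single x (k : ℕ))) h
    rw [hq, zero_mul, zero_add, coeff_sum_mul_X_pow hr, map_zero,
      dif_pos (by simp [hd]), erase_add, erase_single, add_zero,
      erase_of_notMem_support (by simpa using hd)] at hk
    simpa [hd] using hk
  · rw [killVars_singleton_eq_self_iff.1 (hr k) _ hd, map_zero]

end WeierstrassDivision

open Matrix in
theorem exists_mem_span_killVars_eq_pow [DecidableEq σ] {x : σ} {s : Set σ} (hxs : x ∉ s)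
    {N : ℕ} (hN : 0 < N) {a : Fin N → MvPowerSeries σ R}
    (ha0 : ∀ j, constantCoeff (a j) = 0) (ha : ∀ j, killVars {x} (a j) = a j)
    {u K : MvPowerSeries σ R} (hux : killVars {x} u = u) (hus : killVars s u = u)
    (hK : killVars s K = 0) :
    ∃ D : MvPowerSeries σ R, killVars {x} D = D ∧ killVars s D = u ^ N ∧
      D ∈ Ideal.span {distinguishedPoly x a, u + K} := by
  choose q r hr hdiv using fun j : Fin N =>
    exists_eq_mul_distinguishedPoly_add ha0 ha (X x ^ (j : ℕ) * K)
  set C : Matrix (Fin N) (Fin N) (MvPowerSeries σ R) := u • 1 + Matrix.of r with hC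
  have hrs : ∀ j k, killVars s (r j k) = 0 := by
    intro j
    refine eq_zero_of_mul_distinguishedPoly_add_eq_zero (a := fun i => killVars s (a i))
      (fun i => by rw [constantCoeff_killVars, ha0]) (fun i => by rw [killVars_comm, ha])
      (q := killVars s (q j)) (fun k => by rw [killVars_comm, hr]) ?_
    simpa [distinguishedPoly, killVars_X hxs, hK] using (congrArg (killVars s) (hdiv j)).symm
  have hCx : (killVars {x}).mapMatrix C = C := by
    refine Matrix.ext fun j k => ?_
    by_cases h : j = k <;> simp [C, h, hux, hr]
  have hCs : (killVars s).mapMatrix C = u • 1 := by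
    refine Matrix.ext fun j k => ?_
    by_cases h : j = k <;> simp [C, h, hus, hrs]
  have hCv : ∀ j, (C *ᵥ fun k : Fin N => X x ^ (k : ℕ)) j =
      X x ^ (j : ℕ) * (u + K) - q j * distinguishedPoly x a := by
    intro j
    rw [hC, add_mulVec, smul_mulVec, one_mulVec]
    simp only [Pi.add_apply, Pi.smul_apply, smul_eq_mul, mulVec, dotProduct, of_apply]
    linear_combination (hdiv j).symm
  refine ⟨C.det, by rw [AlgHom.map_det, hCx], ?_, ?_⟩
  · rw [AlgHom.map_det, hCs, det_smul, det_one, mul_one, Fintype.card_fin]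
  · have hmem : ∀ j, (C *ᵥ fun k : Fin N => X x ^ (k : ℕ)) j ∈
        Ideal.span {distinguishedPoly x a, u + K} := fun j => by
      rw [hCv j]
      exact sub_mem (Ideal.mul_mem_left _ _ (Ideal.subset_span (by simp)))
        (Ideal.mul_mem_left _ _ (Ideal.subset_span (by simp)))
    simpa using det_mul_mem_of_mulVec_mem hmem ⟨0, hN⟩

end MvPowerSeries

open MvPowerSeries in
/-- Variables: `Sum.inl 0 = X`, `Sum.inl 1 = Y`, `Sum.inr (Sum.inl _) = Z'`,
`Sum.inr (Sum.inr _) = Z''`. -/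
theorem stmt_0_general (N M k' k'' : ℕ) (hN : 0 < N)
    (a : Fin N → MvPowerSeries (Fin 2 ⊕ (Fin k' ⊕ Fin k'')) ℂ)
    (K : MvPowerSeries (Fin 2 ⊕ (Fin k' ⊕ Fin k'')) ℂ)
    (ha0 : ∀ j, constantCoeff (a j) = 0)
    (haX : ∀ j (d : (Fin 2 ⊕ (Fin k' ⊕ Fin k'')) →₀ ℕ),
      d (Sum.inl 0) ≠ 0 → coeff d (a j) = 0)
    (hK : ∀ d : (Fin 2 ⊕ (Fin k' ⊕ Fin k'')) →₀ ℕ,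
      (∀ i : Fin k'', d (Sum.inr (Sum.inr i)) = 0) → coeff d K = 0) :
    ∃ K' : MvPowerSeries (Fin 2 ⊕ (Fin k' ⊕ Fin k'')) ℂ,
      (∀ d : (Fin 2 ⊕ (Fin k' ⊕ Fin k'')) →₀ ℕ,
        d (Sum.inl 0) ≠ 0 → coeff d K' = 0) ∧
      (∀ d : (Fin 2 ⊕ (Fin k' ⊕ Fin k'')) →₀ ℕ,
        (∀ i : Fin k'', d (Sum.inr (Sum.inr i)) = 0) → coeff d K' = 0) ∧
      (X (Sum.inl 1)) ^ (M * N ^ 2) + K' ∈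
        Ideal.span {(X (Sum.inl 0)) ^ N + ∑ j : Fin N, a j * (X (Sum.inl 0)) ^ (j : ℕ),
                    (X (Sum.inl 1)) ^ M + K} := by
  set Y : MvPowerSeries (Fin 2 ⊕ (Fin k' ⊕ Fin k'')) ℂ := X (Sum.inl 1)
  set s : Set (Fin 2 ⊕ (Fin k' ⊕ Fin k'')) := Set.range (Sum.inr ∘ Sum.inr)
  have hY : ∀ t : Set (Fin 2 ⊕ (Fin k' ⊕ Fin k'')), Sum.inl 1 ∉ t → killVars t Y = Y :=
    fun t ht => killVars_X ht
  obtain ⟨D, hDx, hDs, hD⟩ := exists_mem_span_killVars_eq_pow (x := Sum.inl 0) (s := s)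
    (by simp [s]) hN ha0 (fun j => killVars_singleton_eq_self_iff.2 (haX j))
    (u := Y ^ M) (by simp [hY]) (by simp [hY, s])
    (killVars_eq_zero_iff.2 fun d hd => hK d fun i => hd _ ⟨i, rfl⟩)
  have hMN : M * N ≤ M * N ^ 2 := Nat.mul_le_mul_left M (Nat.le_self_pow two_ne_zero N)
  refine ⟨Y ^ (M * N ^ 2 - M * N) * D - Y ^ (M * N ^ 2), fun d hd => ?_, fun d hd => ?_, ?_⟩
  · refine killVars_singleton_eq_self_iff.1 ?_ d hd
    simp [hY, hDx]
  · refine (killVars_eq_zero_iff (s := s)).1 ?_ d (by rintro _ ⟨i, rfl⟩; exact hd i)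
    rw [map_sub, map_mul, map_pow, map_pow, hY _ (by simp [s]), hDs, ← pow_mul, ← pow_add,
      Nat.sub_add_cancel hMN, sub_self]
  · rw [add_sub_cancel]
    exact Ideal.mul_mem_left _ _ hD

open MvPowerSeries in
/-- Lemma 3.7.  Variables: `Sum.inl 0 = X`, `Sum.inl 1 = Y`,
`Sum.inr (Sum.inl _) = Z'`, `Sum.inr (Sum.inr _) = Z''`. -/
theorem stmt_0 (N M k' k'' : ℕ) (hN : 0 < N) (hM : 0 < M)
    (a : Fin N → MvPowerSeries (Fin 2 ⊕ (Fin k' ⊕ Fin k'')) ℂ)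
    (K : MvPowerSeries (Fin 2 ⊕ (Fin k' ⊕ Fin k'')) ℂ)
    (ha0 : ∀ j, constantCoeff (a j) = 0)
    (haX : ∀ j (d : (Fin 2 ⊕ (Fin k' ⊕ Fin k'')) →₀ ℕ),
      d (Sum.inl 0) ≠ 0 → coeff d (a j) = 0)
    (hK : ∀ d : (Fin 2 ⊕ (Fin k' ⊕ Fin k'')) →₀ ℕ,
      (∀ i : Fin k'', d (Sum.inr (Sum.inr i)) = 0) → coeff d K = 0) :
    ∃ K' : MvPowerSeries (Fin 2 ⊕ (Fin k' ⊕ Fin k'')) ℂ,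
      (∀ d : (Fin 2 ⊕ (Fin k' ⊕ Fin k'')) →₀ ℕ,
        d (Sum.inl 0) ≠ 0 → coeff d K' = 0) ∧
      (∀ d : (Fin 2 ⊕ (Fin k' ⊕ Fin k'')) →₀ ℕ,
        (∀ i : Fin k'', d (Sum.inr (Sum.inr i)) = 0) → coeff d K' = 0) ∧
      (X (Sum.inl 1)) ^ (M * N ^ 2) + K' ∈
        Ideal.span {(X (Sum.inl 0)) ^ N + ∑ j : Fin N, a j * (X (Sum.inl 0)) ^ (j : ℕ),
                    (X (Sum.inl 1)) ^ M + K} :=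
  stmt_0_general N M k' k'' hN a K ha0 haX hK
end

section
/- Let A : (ℂ,0) → (ℂ^N,0) be a nonconstant holomorphic (convergent power series) mapping with A(0) = 0. Then there exists a formal power series f ∈ ℂ⟦s⟧ with f(0) = 0 such that at least one component of the formal composition A∘f is a non-convergent formal power series. -/
/-! Let `h ≠ 0` be a component of `A`, of order `m ≥ 1`. For `f = X + O(X²)` and `p ≥ m`,
adding `c • X ^ p` to `f` shifts coefficient `m + p - 1` of `h ∘ f` by `m * coeff m h * c`,
where `m * coeff m h ≠ 0`, and leaves all lower coefficients alone; later corrections of higher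
order do not disturb it. Choosing the corrections one after another, the coefficients of `h ∘ f`
from `2 * m` on can be prescribed arbitrarily, e.g. as factorials, which outgrow every geometric
sequence. -/

section

open PowerSeries
open scoped Nat

lemma pow_dvd_pow_sub_pow_of_dvd_sub {R : Type*} [CommRing R] {x f g : R} {a : ℕ}
    (hf : x ∣ f) (hg : x ∣ g) (hfg : x ^ a ∣ f - g) (k : ℕ) :
    x ^ (a + k - 1) ∣ f ^ k - g ^ k := by
  rcases k with _ | k
  · simp
  rw [← (Commute.all f g).geom_sum₂_mul, Nat.add_sub_cancel, ← add_assoc, Nat.add_sub_cancel,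
    add_comm, pow_add]
  refine mul_dvd_mul (Finset.dvd_sum fun i hi => ?_) hfg
  rw [show k = i + (k - i) by simp at hi; omega, pow_add, add_tsub_cancel_left]
  exact mul_dvd_mul (pow_dvd_pow_of_dvd hf i) (pow_dvd_pow_of_dvd hg _)

lemma exists_X_pow_dvd_sub_of_X_pow_dvd_succ_sub {R : Type*} [CommRing R] (G : ℕ → R⟦X⟧)
    (P : ℕ) (hG : ∀ n, X ^ (P + n) ∣ G (n + 1) - G n) :
    ∃ f : R⟦X⟧, ∀ n, X ^ (P + n) ∣ f - G n := by
  have hstab : ∀ n k, X ^ (P + n) ∣ G (n + k) - G n := by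
    intro n k
    induction k with
    | zero => simp
    | succ k ih =>
      rw [← add_assoc, ← sub_add_sub_cancel _ (G (n + k))]
      exact dvd_add ((pow_dvd_pow X (by omega)).trans (hG (n + k))) ih
  have hcoeff : ∀ {n k i}, i < P + n → coeff i (G (n + k)) = coeff i (G n) := fun hi =>
    sub_eq_zero.1 (by rw [← map_sub]; exact X_pow_dvd_iff.1 (hstab _ _) _ hi)
  refine ⟨mk fun i => coeff i (G (i + 1)), fun n => X_pow_dvd_iff.2 fun i hi => ?_⟩
  rw [map_sub, coeff_mk, sub_eq_zero]
  rcases le_total (i + 1) n with hin | hni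
  · obtain ⟨k, rfl⟩ := Nat.exists_eq_add_of_le hin
    exact (hcoeff (by omega)).symm
  · obtain ⟨k, hk⟩ := Nat.exists_eq_add_of_le hni
    rw [hk]
    exact hcoeff hi

lemma Iio_equivFunOnFinite_symm_unit (n : ℕ) :
    Finset.Iio (Finsupp.equivFunOnFinite.symm fun _ : Unit => n) =
      (Finset.range n).map ⟨Finsupp.single (), Finsupp.single_injective ()⟩ := by
  ext m
  rw [Finsupp.unique_single m]
  simpa [Finsupp.lt_def] using fun h => h.le

lemma aeval_trunc_unit (f h : ℂ⟦X⟧) (n : ℕ) :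
    MvPolynomial.aeval (fun _ : Unit => f)
        (MvPowerSeries.trunc ℂ (Finsupp.equivFunOnFinite.symm fun _ => n) h) =
      ∑ k ∈ Finset.range n, C (coeff k h) * f ^ k := by
  rw [MvPowerSeries.trunc, MvPowerSeries.truncFinset_apply, Iio_equivFunOnFinite_symm_unit,
    Finset.sum_map, map_sum]
  refine Finset.sum_congr rfl fun k _ => ?_
  simp [MvPolynomial.aeval_monomial]

lemma coeff_substPS (f h : ℂ⟦X⟧) (d : ℕ) :
    coeff d (substPS (fun _ : Unit => f) h) =
      ∑ k ∈ Finset.range (d + 1), coeff k h * coeff d (f ^ k) := by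
  conv_lhs => rw [coeff, MvPowerSeries.coeff_apply]; unfold substPS
  rw [Finsupp.sum_single_index rfl, aeval_trunc_unit, ← coeff_def rfl, map_sum]
  simp only [coeff_C_mul, Finsupp.single_eq_same]

lemma coeff_substPS_eq_of_X_pow_dvd_sub {h f g : ℂ⟦X⟧} {m a e : ℕ} (hh : X ^ m ∣ h)
    (hf : X ∣ f) (hg : X ∣ g) (hfg : X ^ a ∣ f - g) (he : e + 1 < a + m) :
    coeff e (substPS (fun _ : Unit => f) h) = coeff e (substPS (fun _ : Unit => g) h) := by
  rw [coeff_substPS, coeff_substPS]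
  refine Finset.sum_congr rfl fun k _ => ?_
  rcases lt_or_ge k m with hkm | hkm
  · rw [X_pow_dvd_iff.1 hh k hkm, zero_mul, zero_mul]
  · rw [← sub_eq_zero, ← mul_sub, ← map_sub,
      X_pow_dvd_iff.1 (pow_dvd_pow_sub_pow_of_dvd_sub hf hg hfg k) e (by omega), mul_zero]

lemma coeff_pow_of_X_dvd {g : ℂ⟦X⟧} (hg : X ∣ g) (hg1 : coeff 1 g = 1) {j k : ℕ}
    (hjk : j ≤ k) :
    coeff j (g ^ k) = if j = k then 1 else 0 := by
  obtain ⟨u, rfl⟩ := hg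
  rw [show (1 : ℕ) = 0 + 1 from rfl, coeff_succ_X_mul, coeff_zero_eq_constantCoeff] at hg1
  rw [mul_pow, coeff_X_pow_mul']
  split_ifs with h1 h2 h2
  · simp [show j = k by omega, hg1]
  · omega
  · omega
  · rfl

lemma coeff_substPS_add_C_mul_X_pow {h g : ℂ⟦X⟧} {m p : ℕ} (hm : 0 < m) (hmp : m ≤ p)
    (hh : X ^ m ∣ h) (hg : X ∣ g) (hg1 : coeff 1 g = 1) (c : ℂ) :
    coeff (m + p - 1) (substPS (fun _ : Unit => g + C c * X ^ p) h) =
      coeff (m + p - 1) (substPS (fun _ : Unit => g) h) + m * coeff m h * c := by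
  have hpow : ∀ k : ℕ, coeff (m + p - 1) ((g + C c * X ^ p) ^ k) =
      coeff (m + p - 1) (g ^ k) + (k : ℂ) * c * coeff (m - 1) (g ^ (k - 1)) := by
    intro k
    obtain ⟨K, hK⟩ := Polynomial.powAddExpansion g (C c * X ^ p) k
    have hsq : coeff (m + p - 1) (K * (C c * X ^ p) ^ 2) = 0 := by
      refine X_pow_dvd_iff.1 (Dvd.intro_left (K * C (c ^ 2)) ?_) _
        (show m + p - 1 < p * 2 by omega)
      rw [mul_pow, ← pow_mul, map_pow]
      ring
    rw [hK, map_add, map_add, hsq, add_zero, ← map_natCast (C (R := ℂ)),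
      show (C (k : ℂ)) * g ^ (k - 1) * (C c * X ^ p) = C (k * c) * (g ^ (k - 1) * X ^ p) by
        rw [map_mul]; ring,
      coeff_C_mul, coeff_mul_X_pow', if_pos (by omega), show m + p - 1 - p = m - 1 by omega]
  rw [coeff_substPS, coeff_substPS]
  simp only [hpow, mul_add, Finset.sum_add_distrib, add_right_inj]
  rw [Finset.sum_eq_single m]
  · rw [coeff_pow_of_X_dvd hg hg1 le_rfl, if_pos rfl]
    ring
  · intro k _ hkm
    rcases lt_or_gt_of_ne hkm with hlt | hgt
    · rw [X_pow_dvd_iff.1 hh k hlt, zero_mul]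
    · rw [coeff_pow_of_X_dvd hg hg1 (by omega), if_neg (by omega), mul_zero, mul_zero]
  · intro hm'
    exact absurd (Finset.mem_range.2 (by omega)) hm'

section reparamApprox

variable (h : ℂ⟦X⟧) (m : ℕ) (t : ℕ → ℂ)

noncomputable def reparamApprox : ℕ → ℂ⟦X⟧
  | 0 => X
  | n + 1 => reparamApprox n +
      C ((t n - coeff (2 * m + n) (substPS (fun _ : Unit => reparamApprox n) h)) /
        (m * coeff m h)) * X ^ (m + 1 + n)

variable {h m t}

lemma X_dvd_reparamApprox (n : ℕ) : X ∣ reparamApprox h m t n := by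
  induction n with
  | zero => exact dvd_rfl
  | succ n ih => exact dvd_add ih (dvd_mul_of_dvd_right (dvd_pow_self X (by omega)) _)

lemma coeff_one_reparamApprox (hm : 0 < m) (n : ℕ) : coeff 1 (reparamApprox h m t n) = 1 := by
  induction n with
  | zero => exact coeff_one_X
  | succ n ih => simp [reparamApprox, ih, coeff_X_pow, show 1 ≠ m + 1 + n by omega]

lemma X_pow_dvd_reparamApprox_succ_sub (n : ℕ) :
    X ^ (m + 1 + n) ∣ reparamApprox h m t (n + 1) - reparamApprox h m t n := by
  rw [reparamApprox, add_sub_cancel_left]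
  exact dvd_mul_left _ _

lemma coeff_substPS_reparamApprox_succ (hm : 0 < m) (hh : X ^ m ∣ h) (hhm : coeff m h ≠ 0)
    (n : ℕ) :
    coeff (2 * m + n) (substPS (fun _ : Unit => reparamApprox h m t (n + 1)) h) = t n := by
  have hstep := coeff_substPS_add_C_mul_X_pow (p := m + 1 + n) hm (by omega) hh
    (X_dvd_reparamApprox (h := h) (t := t) n) (coeff_one_reparamApprox hm n)
  rw [show m + (m + 1 + n) - 1 = 2 * m + n by omega] at hstep
  rw [reparamApprox, hstep]
  have hm' : (m : ℂ) ≠ 0 := Nat.cast_ne_zero.2 hm.ne'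
  field_simp
  ring

end reparamApprox

lemma exists_coeff_substPS_eq {h : ℂ⟦X⟧} {m : ℕ} (hm : 0 < m) (hh : X ^ m ∣ h)
    (hhm : coeff m h ≠ 0) (t : ℕ → ℂ) :
    ∃ f : ℂ⟦X⟧, constantCoeff f = 0 ∧
      ∀ n, coeff (2 * m + n) (substPS (fun _ : Unit => f) h) = t n := by
  obtain ⟨f, hf⟩ := exists_X_pow_dvd_sub_of_X_pow_dvd_succ_sub (reparamApprox h m t) (m + 1)
    X_pow_dvd_reparamApprox_succ_sub
  have hfX : X ∣ f := by
    rw [← sub_add_cancel f (reparamApprox h m t 0)]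
    exact dvd_add ((dvd_pow_self X (by omega)).trans (hf 0)) (X_dvd_reparamApprox 0)
  refine ⟨f, X_dvd_iff.1 hfX, fun n => ?_⟩
  rw [← coeff_substPS_reparamApprox_succ (t := t) hm hh hhm n]
  exact coeff_substPS_eq_of_X_pow_dvd_sub hh hfX (X_dvd_reparamApprox _) (hf (n + 1)) (by omega)

lemma not_isConvergentPS_of_factorial_le (F : ℂ⟦X⟧) (e₀ : ℕ)
    (hF : ∀ e ≥ e₀, (e ! : ℝ) ≤ ‖coeff e F‖) : ¬ IsConvergentPS F := by
  rintro ⟨C, r, -, hb⟩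
  obtain ⟨e, he, he₀⟩ :=
    ((((FloorSemiring.tendsto_pow_div_factorial_atTop r).const_mul C).eventually
      (gt_mem_nhds (show C * 0 < 1 by simp))).and (Filter.eventually_ge_atTop e₀)).exists
  have hbe : ‖coeff e F‖ ≤ C * r ^ e := by
    simpa [Finsupp.sum_single_index] using hb (Finsupp.single () e)
  rw [← mul_div_assoc, div_lt_one (by positivity)] at he
  linarith [hF e he₀]

lemma exists_not_isConvergentPS_substPS {h : ℂ⟦X⟧} (h0 : constantCoeff h = 0) (hh : h ≠ 0) :
    ∃ f : ℂ⟦X⟧, constantCoeff f = 0 ∧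
      ¬ IsConvergentPS (substPS (fun _ : Unit => f) h) := by
  obtain ⟨m, hm⟩ := ENat.ne_top_iff_exists.1 (order_eq_top.not.2 hh)
  obtain ⟨hhm, hlow⟩ := order_eq_nat.1 hm.symm
  have hm0 : 0 < m :=
    Nat.pos_of_ne_zero fun hm0 => hhm (by rw [hm0, coeff_zero_eq_constantCoeff, h0])
  obtain ⟨f, hf0, hf⟩ :=
    exists_coeff_substPS_eq hm0 (X_pow_dvd_iff.2 hlow) hhm fun n => ((2 * m + n)! : ℂ)
  refine ⟨f, hf0, not_isConvergentPS_of_factorial_le _ (2 * m) fun e he => ?_⟩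
  obtain ⟨n, rfl⟩ := Nat.exists_eq_add_of_le he
  rw [hf, Complex.norm_natCast]

end

open MvPowerSeries in
theorem stmt_12_general (N : ℕ) (A : Fin N → MvPowerSeries Unit ℂ)
    (hA0 : ∀ j, constantCoeff (A j) = 0)
    (hA : A ≠ 0) :
    ∃ f : MvPowerSeries Unit ℂ, constantCoeff f = 0 ∧
      ∃ j, ¬ IsConvergentPS (substPS (fun _ : Unit => f) (A j)) := by
  obtain ⟨j, hj⟩ := Function.ne_iff.1 hA
  obtain ⟨f, hf0, hf⟩ := exists_not_isConvergentPS_substPS (hA0 j) hj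
  exact ⟨f, hf0, j, hf⟩

open MvPowerSeries in
/-- Remark 2.3. A nonconstant holomorphic curve admits a formal
reparametrization with some nonconvergent component. -/
theorem stmt_12 (N : ℕ) (A : Fin N → MvPowerSeries Unit ℂ)
    (hconv : ∀ j, IsConvergentPS (A j))
    (hA0 : ∀ j, constantCoeff (A j) = 0)
    (hA : A ≠ 0) :
    ∃ f : MvPowerSeries Unit ℂ, constantCoeff f = 0 ∧
      ∃ j, ¬ IsConvergentPS (substPS (fun _ : Unit => f) (A j)) :=
  stmt_12_general N A hA0 hA
end

section
/- Let M, M' be formal generic submanifolds of the same dimension through 0 in ℂ^N, given in normal coordinates Z = (z,w) ∈ ℂ^n × ℂ^d and Z' = (z',w'), and let H = (F,G) : (ℂ^N,0) → (ℂ^N,0) be a finite formal mapping sending M into M' (in particular G(z,0) = 0 by normality). Then the formal mapping z ↦ F(z,0) from (ℂ^n,0) to (ℂ^n,0) is again finite, i.e., the ideal generated by the components F₁(z,0),…,F_n(z,0) has finite codimension in ℂ⟦z⟧. -/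
/-!
Setting `w = 0` is a surjective algebra map `ℂ⟦z,w⟧ → ℂ⟦z⟧` sending `F` to `F(z,0)` and `G` to
`G(z,0) = 0`, so it induces a surjection `ℂ⟦z,w⟧ ⧸ (F, G) → ℂ⟦z⟧ ⧸ (F(z,0))`, and a quotient of a
finite-dimensional space is finite-dimensional.
-/

theorem Ideal.finite_quotient_of_surjective {R A B : Type*} [CommSemiring R] [CommRing A]
    [CommRing B] [Algebra R A] [Algebra R B] {φ : A →ₐ[R] B} (hφ : Function.Surjective φ)
    {I : Ideal A} {J : Ideal B} (hIJ : I ≤ J.comap φ) [Module.Finite R (A ⧸ I)] :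
    Module.Finite R (B ⧸ J) :=
  Module.Finite.of_surjective (Ideal.quotientMapₐ J φ hIJ).toLinearMap
    (Ideal.quotientMap_surjective (H := hIJ) hφ)

theorem MvPowerSeries.killCompl_surjective {σ τ R : Type*} [CommSemiring R] (e : σ ↪ τ) :
    Function.Surjective (MvPowerSeries.killCompl (R := R) e) :=
  fun p => ⟨MvPowerSeries.rename e p, MvPowerSeries.killCompl_rename_app p⟩

theorem setSnd0_eq_killCompl {A B : Type*} (f : MvPowerSeries (A ⊕ B) ℂ) :
    setSnd0 f = MvPowerSeries.killCompl Function.Embedding.inl f := by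
  ext e
  rw [MvPowerSeries.coeff_killCompl, Finsupp.embDomain_eq_mapDomain]
  rfl

open MvPowerSeries in
theorem stmt_13_general (n d : ℕ)
    (F : Fin n → MvPowerSeries (Fin n ⊕ Fin d) ℂ)
    (G : Fin d → MvPowerSeries (Fin n ⊕ Fin d) ℂ)
    (hfin : FiniteDimensional ℂ
      (MvPowerSeries (Fin n ⊕ Fin d) ℂ ⧸
        Ideal.span (Set.range F ∪ Set.range G)))
    (hGz0 : ∀ j, setSnd0 (G j) = 0) :
    FiniteDimensional ℂ
      (MvPowerSeries (Fin n) ℂ ⧸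
        Ideal.span (Set.range fun j => setSnd0 (F j))) := by
  refine Ideal.finite_quotient_of_surjective
    (I := Ideal.span (Set.range F ∪ Set.range G)) (killCompl_surjective Function.Embedding.inl) ?_
  rw [Ideal.span_le]
  rintro _ (⟨j, rfl⟩ | ⟨j, rfl⟩) <;> rw [SetLike.mem_coe, Ideal.mem_comap, ← setSnd0_eq_killCompl]
  · exact Ideal.subset_span ⟨j, rfl⟩
  · rw [hGz0 j]
    exact zero_mem _

open MvPowerSeries in
/-- from Lemma 6.1.  Variables: `Sum.inl = z`, `Sum.inr = w`;
`F`, `G` are the components of a finite formal map in normal coordinates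
(so `G (z,0) = 0`), and `z ↦ F (z,0)` is again finite. -/
theorem stmt_13 (n d : ℕ)
    (F : Fin n → MvPowerSeries (Fin n ⊕ Fin d) ℂ)
    (G : Fin d → MvPowerSeries (Fin n ⊕ Fin d) ℂ)
    (hF0 : ∀ j, constantCoeff (F j) = 0)
    (hG0 : ∀ j, constantCoeff (G j) = 0)
    (hfin : FiniteDimensional ℂ
      (MvPowerSeries (Fin n ⊕ Fin d) ℂ ⧸
        Ideal.span (Set.range F ∪ Set.range G)))
    (hGz0 : ∀ j, setSnd0 (G j) = 0) :
    FiniteDimensional ℂ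
      (MvPowerSeries (Fin n) ℂ ⧸
        Ideal.span (Set.range fun j => setSnd0 (F j))) :=
  stmt_13_general n d F G hfin hGz0
end
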